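/- arXiv:2004.13246 — 3 statements merged into one kernel-verified Lean document; each statement's English description precedes it below -/
import Mathlib

section
/- Let H be a complex Hilbert space and let D, D* : H → H be bounded linear operators that are adjoint to each other, with D² = 0. Suppose there is λ > 0 such that ‖ψ‖ ≤ λ⁻¹(‖Dψ‖ + ‖D*ψ‖) for all ψ orthogonal to Ker D ∩ Ker D*. Then the range of D is closed. -/
theorem stmt3 {H : Type*} [NormedAddCommGroup H] [InnerProductSpace ℂ H]
    [CompleteSpace H] (D Dstar : H →L[ℂ] H)
    (hadj : Dstar = ContinuousLinearMap.adjoint D)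
    (hD2 : D ∘L D = 0) (lam : ℝ) (hlam : 0 < lam)
    (hest : ∀ ψ ∈ (LinearMap.ker (D : H →ₗ[ℂ] H) ⊓ LinearMap.ker (Dstar : H →ₗ[ℂ] H) : Submodule ℂ H)ᗮ,
      ‖ψ‖ ≤ lam⁻¹ * (‖D ψ‖ + ‖Dstar ψ‖)) :
    IsClosed (Set.range D) := by
  set K : Submodule ℂ H := LinearMap.ker (D : H →ₗ[ℂ] H) with hK
  haveI : CompleteSpace K := (ContinuousLinearMap.isClosed_ker D).completeSpace_coe
  -- D* vanishes on Kᗮ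
  have hDstar0 : ∀ ψ ∈ Kᗮ, Dstar ψ = 0 := by
    intro ψ hψ
    have h1 : D (Dstar ψ) ∈ K := by
      have h2 := congrArg (fun f => f (Dstar ψ)) hD2
      simpa [hK, LinearMap.mem_ker] using h2
    have hinner : (inner ℂ (Dstar ψ) (Dstar ψ) : ℂ) = 0 := by
      have : (inner ℂ (Dstar ψ) (Dstar ψ) : ℂ) = inner ℂ ψ (D (Dstar ψ)) := by
        rw [hadj, ContinuousLinearMap.adjoint_inner_left]
      rw [this]
      exact (Submodule.mem_orthogonal' K ψ).mp hψ _ h1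
    exact inner_self_eq_zero.mp hinner
  -- anti-lipschitz estimate on Kᗮ
  have hle : (K ⊓ LinearMap.ker (Dstar : H →ₗ[ℂ] H) : Submodule ℂ H) ≤ K := inf_le_left
  have hanti : ∀ ψ ∈ Kᗮ, ‖ψ‖ ≤ lam⁻¹ * ‖D ψ‖ := by
    intro ψ hψ
    have hψ' : ψ ∈ (K ⊓ LinearMap.ker (Dstar : H →ₗ[ℂ] H) : Submodule ℂ H)ᗮ :=
      Submodule.orthogonal_le hle hψ
    have := hest ψ hψ'
    simpa [hDstar0 ψ hψ] using this
  -- restricted operator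
  set T : Kᗮ →L[ℂ] H := D.comp (Submodule.subtypeL Kᗮ) with hT
  have hTanti : AntilipschitzWith (Real.toNNReal lam⁻¹) T := by
    apply ContinuousLinearMap.antilipschitz_of_bound
    intro x
    have := hanti x x.2
    simpa [hT, Real.coe_toNNReal _ (le_of_lt (inv_pos.mpr hlam))] using this
  have hclosed : IsClosed (Set.range T) :=
    hTanti.isClosed_range T.uniformContinuous
  have hrange : Set.range D = Set.range T := by
    ext y
    constructor
    · rintro ⟨x, rfl⟩
      refine ⟨⟨x - (K.orthogonalProjectionOnto x : H),
        K.sub_starProjection_mem_orthogonal x⟩, ?_⟩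
      have hk : D (K.starProjection x) = 0 :=
        (K.orthogonalProjectionOnto x).2
      simp [hT, ContinuousLinearMap.comp_apply, map_sub, hk]
    · rintro ⟨x, rfl⟩
      exact ⟨x, rfl⟩
  rw [hrange]
  exact hclosed
end

section
/- Let H be a complex Hilbert space and D a bounded operator on H with adjoint D* and D² = 0. Let Δ = D D* + D* D and ℋ = Ker Δ. If the range of D and the range of D* are closed, then H decomposes as the orthogonal direct sum H = ℋ ⊕ Range(D) ⊕ Range(D*). -/
open scoped InnerProduct InnerProductSpace

/-!
Since `(range T)ᗮ = ker T†`, closedness of the two ranges splits `x` as `u + y` with `u ∈ range D`,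
`D† y = 0`, and then `y = v + h` with `v ∈ range D†`, `D h = 0`; as `D†² = 0`, also `D† h = 0`.
Harmonic vectors are those of `ker D ∩ ker D†` because `re ⟪Δx, x⟫ = ‖D x‖² + ‖D† x‖²`, and the
ranges are orthogonal because `⟪D a, D† b⟫ = ⟪D² a, b⟫ = 0`.
-/

namespace ContinuousLinearMap

variable {𝕜 E F : Type*} [RCLike 𝕜]
  [NormedAddCommGroup E] [InnerProductSpace 𝕜 E] [CompleteSpace E]
  [NormedAddCommGroup F] [InnerProductSpace 𝕜 F] [CompleteSpace F]

theorem exists_eq_add_adjoint_apply_eq_zero {T : E →L[𝕜] F} (hT : IsClosed (Set.range T))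
    (x : F) : ∃ u ∈ Set.range T, ∃ y, (T†) y = 0 ∧ x = u + y := by
  have hT' : IsClosed (T.range : Set F) := hT
  have : CompleteSpace T.range := hT'.completeSpace_coe
  obtain ⟨u, hu, y, hy, rfl⟩ := T.range.exists_add_mem_mem_orthogonal x
  rw [orthogonal_range] at hy
  exact ⟨u, hu, y, hy, rfl⟩

theorem inner_apply_adjoint_apply_eq_zero {D : E →L[𝕜] E} (hD : D ∘L D = 0) (x y : E) :
    ⟪D x, (D†) y⟫_𝕜 = 0 := by
  rw [adjoint_inner_right, ← comp_apply, hD, zero_apply, inner_zero_left]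

theorem comp_adjoint_add_adjoint_comp_apply_eq_zero_iff {D : E →L[𝕜] E} {x : E} :
    (D ∘L D† + D† ∘L D) x = 0 ↔ D x = 0 ∧ (D†) x = 0 := by
  refine ⟨fun h ↦ ?_, fun ⟨h₁, h₂⟩ ↦ by simp [h₁, h₂]⟩
  have hsum : ‖(D†) x‖ ^ 2 + ‖D x‖ ^ 2 = 0 := by
    rw [apply_norm_sq_eq_inner_adjoint_left, apply_norm_sq_eq_inner_adjoint_left, adjoint_adjoint,
      ← map_add, ← inner_add_left, ← add_apply, h, inner_zero_left, map_zero]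
  obtain ⟨h₁, h₂⟩ := (add_eq_zero_iff_of_nonneg (sq_nonneg _) (sq_nonneg _)).mp hsum
  exact ⟨norm_eq_zero.mp (pow_eq_zero_iff two_ne_zero |>.mp h₂),
    norm_eq_zero.mp (pow_eq_zero_iff two_ne_zero |>.mp h₁)⟩

theorem exists_eq_add_add_of_isClosed_range {D : E →L[𝕜] E} (hD : D ∘L D = 0)
    (hR : IsClosed (Set.range D)) (hR' : IsClosed (Set.range (D†))) (x : E) :
    ∃ h u v, D h = 0 ∧ (D†) h = 0 ∧ u ∈ Set.range D ∧ v ∈ Set.range (D†) ∧ x = h + u + v := by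
  obtain ⟨u, hu, y, hy, rfl⟩ := exists_eq_add_adjoint_apply_eq_zero hR x
  obtain ⟨v, ⟨w, rfl⟩, h, hh, rfl⟩ := exists_eq_add_adjoint_apply_eq_zero hR' y
  rw [adjoint_adjoint] at hh
  have hD' : D† ∘L D† = 0 := by rw [← adjoint_comp, hD, map_zero]
  refine ⟨h, u, (D†) w, hh, ?_, hu, ⟨w, rfl⟩, by abel⟩
  rwa [map_add, ← comp_apply, hD', zero_apply, zero_add] at hy

end ContinuousLinearMap

open ContinuousLinearMap

theorem stmt4 {H : Type*} [NormedAddCommGroup H] [InnerProductSpace ℂ H]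
    [CompleteSpace H] (D Dstar : H →L[ℂ] H)
    (hadj : Dstar = ContinuousLinearMap.adjoint D)
    (hD2 : D ∘L D = 0)
    (hRD : IsClosed (Set.range D)) (hRDs : IsClosed (Set.range Dstar)) :
    (∀ x : H, ∃ h u v : H,
        h ∈ LinearMap.ker ((D ∘L Dstar + Dstar ∘L D : H →L[ℂ] H) : H →ₗ[ℂ] H) ∧
        u ∈ Set.range D ∧ v ∈ Set.range Dstar ∧ x = h + u + v) ∧
    (∀ h ∈ LinearMap.ker ((D ∘L Dstar + Dstar ∘L D : H →L[ℂ] H) : H →ₗ[ℂ] H),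
      ∀ u ∈ Set.range D, (inner ℂ h u : ℂ) = 0) ∧
    (∀ h ∈ LinearMap.ker ((D ∘L Dstar + Dstar ∘L D : H →L[ℂ] H) : H →ₗ[ℂ] H),
      ∀ v ∈ Set.range Dstar, (inner ℂ h v : ℂ) = 0) ∧
    (∀ u ∈ Set.range D, ∀ v ∈ Set.range Dstar, (inner ℂ u v : ℂ) = 0) := by
  subst hadj
  have hker (h : H) : h ∈ LinearMap.ker ((D ∘L D† + D† ∘L D : H →L[ℂ] H) : H →ₗ[ℂ] H) ↔
      D h = 0 ∧ (D†) h = 0 :=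
    comp_adjoint_add_adjoint_comp_apply_eq_zero_iff
  refine ⟨fun x ↦ ?_, ?_, ?_, ?_⟩
  · obtain ⟨h, u, v, hDh, hD'h, hu, hv, rfl⟩ := exists_eq_add_add_of_isClosed_range hD2 hRD hRDs x
    exact ⟨h, u, v, (hker h).2 ⟨hDh, hD'h⟩, hu, hv, rfl⟩
  · rintro h hh _ ⟨w, rfl⟩
    rw [← adjoint_inner_left, ((hker h).1 hh).2, inner_zero_left]
  · rintro h hh _ ⟨w, rfl⟩
    rw [adjoint_inner_right, ((hker h).1 hh).1, inner_zero_left]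
  · rintro _ ⟨a, rfl⟩ _ ⟨b, rfl⟩
    exact inner_apply_adjoint_apply_eq_zero hD2 a b
end

section
/- Let H be a complex Hilbert space, D bounded with adjoint D* and D² = 0, Δ = D D* + D* D, 𝐇 the orthogonal projection onto Ker Δ, and G bounded self-adjoint with Δ G = I − 𝐇 and 𝐇 G = G 𝐇 = 0. Let P : H₀ → H be a bounded operator from another Hilbert space H₀. Assume D P g = 0 and 𝐇 (P g) = 0 for some g ∈ H₀. Then setting Ω' = D* G P g, one has D Ω' = P g. -/
theorem stmt16 {H₀ H : Type*}
    [NormedAddCommGroup H₀] [InnerProductSpace ℂ H₀] [CompleteSpace H₀]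
    [NormedAddCommGroup H] [InnerProductSpace ℂ H] [CompleteSpace H]
    (P : H₀ →L[ℂ] H) (D Dstar Hp G : H →L[ℂ] H)
    (hadj : Dstar = ContinuousLinearMap.adjoint D)
    (hD2 : D ∘L D = 0)
    (hHp1 : ∀ x, Hp x ∈ LinearMap.ker ((D ∘L Dstar + Dstar ∘L D : H →L[ℂ] H) : H →ₗ[ℂ] H))
    (hHp2 : ∀ x ∈ LinearMap.ker ((D ∘L Dstar + Dstar ∘L D : H →L[ℂ] H) : H →ₗ[ℂ] H), Hp x = x)
    (hHpsa : IsSelfAdjoint Hp)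
    (hGsa : IsSelfAdjoint G)
    (hG1 : (D ∘L Dstar + Dstar ∘L D) ∘L G = ContinuousLinearMap.id ℂ H - Hp)
    (hG3 : Hp ∘L G = 0) (hG4 : G ∘L Hp = 0)
    (g : H₀) (hDPg : D (P g) = 0) (hHPg : Hp (P g) = 0) :
    D (Dstar (G (P g))) = P g := by
  have key : D (Dstar (G (P g))) + Dstar (D (G (P g))) = P g := by
    have := congrArg (fun T : H →L[ℂ] H => T (P g)) hG1
    simp only [ContinuousLinearMap.comp_apply, ContinuousLinearMap.add_apply,
      ContinuousLinearMap.sub_apply, ContinuousLinearMap.id_apply, hHPg, sub_zero] at this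
    exact this
  set u := Dstar (D (G (P g))) with hu
  have hu0 : u = 0 := by
    have h1 : (inner ℂ u u : ℂ) = 0 := by
      have huPg : (inner ℂ u (P g) : ℂ) = 0 := by
        rw [hu]
        rw [show (inner ℂ (Dstar (D (G (P g)))) (P g) : ℂ) = inner ℂ (D (G (P g))) (D (P g)) from by
          rw [hadj]; exact ContinuousLinearMap.adjoint_inner_left D _ _, hDPg, inner_zero_right]
      have hstar : ∀ x y : H, (inner ℂ (Dstar x) y : ℂ) = inner ℂ x (D y) := by
        intro x y; rw [hadj]; exact ContinuousLinearMap.adjoint_inner_left D y x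
      have huD : (inner ℂ u (D (Dstar (G (P g)))) : ℂ) = 0 := by
        rw [hu, hstar]
        have : D (D (Dstar (G (P g)))) = 0 := by
          have := congrArg (fun T : H →L[ℂ] H => T (Dstar (G (P g)))) hD2
          simpa using this
        rw [this, inner_zero_right]
      have h2 : u = P g - D (Dstar (G (P g))) := (eq_sub_of_add_eq' key).symm ▸ rfl
      calc (inner ℂ u u : ℂ) = inner ℂ u (P g - D (Dstar (G (P g)))) := by
            rw [← h2]
        _ = inner ℂ u (P g) - inner ℂ u (D (Dstar (G (P g)))) := inner_sub_right _ _ _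
        _ = 0 := by rw [huPg, huD, sub_zero]
    exact inner_self_eq_zero.mp h1
  rw [hu0, add_zero] at key
  exact key
end
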